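/- For any two probability measures ρ and ρ₀ on ℝⁿ with finite second moments, means μ, μ₀ and covariances S, P₀ ≻ 0, one has W₂²(ρ, ρ₀) ≥ ‖μ − μ₀‖² + tr(S + P₀ − 2(P₀^{1/2} S P₀^{1/2})^{1/2}). -/

import Mathlib

/-! For a coupling `π` of `ρ, ρ₀` and any positive definite `K`, write `x - y = u - v + c` with
`u = x - μ`, `v = y - μ₀`, `c = μ - μ₀`, and bound the cross term by
`2 ⟪u, v⟫ ≤ ⟪u, K u⟫ + ⟪v, K⁻¹ v⟫`. The resulting minorant of `‖x - y‖²` splits into a function of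
`x` plus a function of `y`, so its `π`-integral only sees the marginals and equals
`‖c‖² + tr ((1 - K) S) + tr ((1 - K⁻¹) P₀)`. The choice `K = Q N⁻¹ Q` with `Q = P₀^{1/2}` and
`N = (Q S Q)^{1/2}` gives `tr (K S) = tr (K⁻¹ P₀) = tr N`. -/

open Matrix MeasureTheory

/-- Squared Wasserstein-2 distance between probability measures on `ℝⁿ`,
defined as the infimum of `E‖x - y‖²` over couplings. -/
noncomputable def W2sq {n : ℕ} (ρ ρ₀ : Measure (Fin n → ℝ)) : ℝ :=
  sInf {r : ℝ | ∃ π : Measure ((Fin n → ℝ) × (Fin n → ℝ)),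
    π.map Prod.fst = ρ ∧ π.map Prod.snd = ρ₀ ∧
    r = ∫ p, (p.1 - p.2) ⬝ᵥ (p.1 - p.2) ∂π}

open scoped ComplexOrder in
/-- The positive semidefinite square root, as defined in the older Mathlib
(removed from current Mathlib). -/
noncomputable def Matrix.PosSemidef.sqrt {m 𝕜 : Type*} [Fintype m] [DecidableEq m] [RCLike 𝕜]
    {A : Matrix m m 𝕜} (hA : A.PosSemidef) : Matrix m m 𝕜 :=
  hA.1.eigenvectorUnitary.1 * diagonal ((↑) ∘ (√·) ∘ hA.1.eigenvalues) *
    (star hA.1.eigenvectorUnitary : Matrix m m 𝕜)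

section Sqrt
open scoped ComplexOrder
variable {m 𝕜 : Type*} [Fintype m] [DecidableEq m] [RCLike 𝕜] {A : Matrix m m 𝕜}

lemma Matrix.PosSemidef.posSemidef_sqrt (hA : A.PosSemidef) : hA.sqrt.PosSemidef :=
  (posSemidef_diagonal_iff.mpr fun i => by simp [Real.sqrt_nonneg]).mul_mul_conjTranspose_same _

lemma Matrix.PosSemidef.sqrt_mul_self (hA : A.PosSemidef) : hA.sqrt * hA.sqrt = A := by
  set U : Matrix m m 𝕜 := (hA.1.eigenvectorUnitary : Matrix m m 𝕜)
  have hUU : star U * U = 1 := Unitary.coe_star_mul_self _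
  have hDD : diagonal ((↑) ∘ (√·) ∘ hA.1.eigenvalues) * diagonal ((↑) ∘ (√·) ∘ hA.1.eigenvalues)
      = (diagonal ((↑) ∘ hA.1.eigenvalues) : Matrix m m 𝕜) := by
    rw [diagonal_mul_diagonal]
    congr 1
    funext i
    simp [← RCLike.ofReal_mul, Real.mul_self_sqrt (hA.eigenvalues_nonneg i)]
  conv_rhs => rw [hA.1.spectral_theorem, Unitary.conjStarAlgAut_apply, ← hDD]
  simp only [PosSemidef.sqrt, Matrix.mul_assoc]
  rw [← Matrix.mul_assoc (star U) U, hUU, Matrix.one_mul]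

lemma Matrix.PosDef.exists_posDef_trace_mul_eq_trace_sqrt {S P : Matrix m m 𝕜} (hS : S.PosDef)
    (hP : P.PosDef) (hmid : (hP.posSemidef.sqrt * S * hP.posSemidef.sqrt).PosSemidef) :
    ∃ K : Matrix m m 𝕜, K.PosDef ∧ (K * S).trace = hmid.sqrt.trace ∧
      (K⁻¹ * P).trace = hmid.sqrt.trace := by
  set Q := hP.posSemidef.sqrt
  set N := hmid.sqrt
  have hQQ : Q * Q = P := hP.posSemidef.sqrt_mul_self
  have hNN : N * N = Q * S * Q := hmid.sqrt_mul_self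
  have hQ : IsUnit Q := isUnit_of_mul_isUnit_left (hQQ ▸ hP.isUnit)
  have hQstar : star Q = Q := hP.posSemidef.posSemidef_sqrt.1
  have hQSQ : (Q * S * Q).PosDef := by
    simpa [hQstar] using (IsUnit.posDef_star_left_conjugate_iff (x := S) hQ).mpr hS
  have hN : IsUnit N := isUnit_of_mul_isUnit_left (hNN ▸ hQSQ.isUnit)
  have hNpd : N.PosDef := hmid.posSemidef_sqrt.posDef_iff_isUnit.mpr hN
  have hQdet : IsUnit Q.det := (isUnit_iff_isUnit_det Q).mp hQ
  have hNdet : IsUnit N.det := (isUnit_iff_isUnit_det N).mp hN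
  refine ⟨Q * N⁻¹ * Q, ?_, ?_, ?_⟩
  · simpa [hQstar] using (IsUnit.posDef_star_left_conjugate_iff hQ).mpr hNpd.inv
  · rw [Matrix.mul_assoc _ Q S, trace_mul_comm, ← Matrix.mul_assoc, ← hNN,
      mul_nonsing_inv_cancel_right _ _ hNdet]
  · rw [Matrix.mul_inv_rev, Matrix.mul_inv_rev, nonsing_inv_nonsing_inv _ hNdet, ← hQQ,
      ← Matrix.mul_assoc, ← Matrix.mul_assoc, nonsing_inv_mul_cancel_right _ _ hQdet,
      trace_mul_comm, ← Matrix.mul_assoc, mul_nonsing_inv _ hQdet, Matrix.one_mul]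

end Sqrt

section QuadraticForm
variable {ι : Type*} [Fintype ι]

lemma Matrix.IsSymm.dotProduct_mulVec_comm {A : Matrix ι ι ℝ} (hA : A.IsSymm) (x y : ι → ℝ) :
    x ⬝ᵥ (A *ᵥ y) = y ⬝ᵥ (A *ᵥ x) := by
  rw [dotProduct_mulVec, ← mulVec_transpose, hA.eq, dotProduct_comm]

variable [DecidableEq ι]

lemma Matrix.PosDef.two_mul_dotProduct_le {K : Matrix ι ι ℝ} (hK : K.PosDef) (a b : ι → ℝ) :
    2 * (a ⬝ᵥ b) ≤ a ⬝ᵥ (K *ᵥ a) + b ⬝ᵥ (K⁻¹ *ᵥ b) := by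
  set w := K⁻¹ *ᵥ b
  have hb : b = K *ᵥ w := by
    rw [mulVec_mulVec, mul_nonsing_inv _ ((isUnit_iff_isUnit_det K).mp hK.isUnit), one_mulVec]
  have hnonneg := hK.posSemidef.dotProduct_mulVec_nonneg (a - w)
  rw [star_trivial, mulVec_sub, dotProduct_sub, sub_dotProduct, sub_dotProduct] at hnonneg
  rw [hb, dotProduct_comm (K *ᵥ w) w]
  linarith [(isHermitian_iff_isSymm.mp hK.isHermitian).dotProduct_mulVec_comm a w]

lemma Matrix.PosDef.dotProduct_self_sub_ge {K : Matrix ι ι ℝ} (hK : K.PosDef) (u v c : ι → ℝ) :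
    (u ⬝ᵥ ((1 - K) *ᵥ u) + ((2 : ℝ) • c) ⬝ᵥ u) + (v ⬝ᵥ ((1 - K⁻¹) *ᵥ v) + (-((2 : ℝ) • c)) ⬝ᵥ v)
      + c ⬝ᵥ c ≤ (u - v + c) ⬝ᵥ (u - v + c) := by
  have := hK.two_mul_dotProduct_le u v
  simp only [sub_mulVec, one_mulVec, dotProduct_sub, add_dotProduct, sub_dotProduct,
    dotProduct_add, neg_dotProduct, smul_dotProduct, smul_eq_mul, dotProduct_comm u c,
    dotProduct_comm v c, dotProduct_comm v u] at *
  linarith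

end QuadraticForm

section Moments
variable {ι : Type*} [Fintype ι] {ν : Measure (ι → ℝ)}

lemma dotProduct_mulVec_self_eq_sum_sum (A : Matrix ι ι ℝ) (u : ι → ℝ) :
    u ⬝ᵥ (A *ᵥ u) = ∑ i, ∑ j, A i j * (u i * u j) := by
  simp only [dotProduct, mulVec, Finset.mul_sum]
  exact Finset.sum_congr rfl fun i _ => Finset.sum_congr rfl fun j _ => by ring

lemma memLp_two_apply_of_integrable_dotProduct_self (h2 : Integrable (fun x => x ⬝ᵥ x) ν)
    (i : ι) : MemLp (fun x => x i) 2 ν := by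
  refine (memLp_two_iff_integrable_sq (continuous_apply i).aestronglyMeasurable).mpr
    (h2.mono' ((continuous_apply i).pow 2).aestronglyMeasurable (.of_forall fun x => ?_))
  rw [Real.norm_eq_abs, abs_pow, sq_abs, sq]
  exact Finset.single_le_sum (f := fun j => x j * x j) (fun j _ => mul_self_nonneg _)
    (Finset.mem_univ i)

variable [IsFiniteMeasure ν] (h2 : Integrable (fun x => x ⬝ᵥ x) ν) (m : ι → ℝ)
include h2

lemma integrable_apply_sub (i : ι) : Integrable (fun x => x i - m i) ν :=
  ((memLp_two_apply_of_integrable_dotProduct_self h2 i).integrable one_le_two).sub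
    (integrable_const _)

lemma integrable_sub_mul_sub (i j : ι) : Integrable (fun x => (x i - m i) * (x j - m j)) ν :=
  ((memLp_two_apply_of_integrable_dotProduct_self h2 i).sub (memLp_const _)).integrable_mul
    ((memLp_two_apply_of_integrable_dotProduct_self h2 j).sub (memLp_const _))

lemma integrable_dotProduct_mulVec_sub (A : Matrix ι ι ℝ) :
    Integrable (fun x => (x - m) ⬝ᵥ (A *ᵥ (x - m))) ν := by
  simp only [dotProduct_mulVec_self_eq_sum_sum, Pi.sub_apply]
  exact integrable_finsetSum _ fun i _ => integrable_finsetSum _ fun j _ =>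
    (integrable_sub_mul_sub h2 m i j).const_mul _

lemma integral_dotProduct_mulVec_sub {C : Matrix ι ι ℝ}
    (hC : ∀ i j, C i j = ∫ x, (x i - m i) * (x j - m j) ∂ν) (A : Matrix ι ι ℝ) :
    ∫ x, (x - m) ⬝ᵥ (A *ᵥ (x - m)) ∂ν = (A * C).trace := by
  simp only [dotProduct_mulVec_self_eq_sum_sum, Pi.sub_apply, trace, diag, mul_apply]
  refine (integral_finsetSum _ fun i _ => integrable_finsetSum _ fun j _ =>
    (integrable_sub_mul_sub h2 m i j).const_mul _).trans (Finset.sum_congr rfl fun i _ => ?_)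
  refine (integral_finsetSum _ fun j _ =>
    (integrable_sub_mul_sub h2 m i j).const_mul _).trans (Finset.sum_congr rfl fun j _ => ?_)
  rw [integral_const_mul, hC j i]
  exact congrArg _ (integral_congr_ae (.of_forall fun x => mul_comm _ _))

lemma integrable_dotProduct_sub (c : ι → ℝ) : Integrable (fun x => c ⬝ᵥ (x - m)) ν := by
  simp only [dotProduct, Pi.sub_apply]
  exact integrable_finsetSum _ fun i _ => (integrable_apply_sub h2 m i).const_mul _

lemma integral_dotProduct_sub_eq_zero [IsProbabilityMeasure ν]
    (hm : ∀ i, m i = ∫ x, x i ∂ν) (c : ι → ℝ) : ∫ x, c ⬝ᵥ (x - m) ∂ν = 0 := by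
  simp only [dotProduct, Pi.sub_apply]
  rw [integral_finsetSum _ fun i _ => (integrable_apply_sub h2 m i).const_mul _]
  refine Finset.sum_eq_zero fun i _ => ?_
  rw [integral_const_mul, integral_sub
    ((memLp_two_apply_of_integrable_dotProduct_self h2 i).integrable one_le_two)
    (integrable_const _), ← hm, integral_const]
  simp

lemma integrable_dotProduct_mulVec_sub_add_dotProduct_sub (A : Matrix ι ι ℝ) (c : ι → ℝ) :
    Integrable (fun x => (x - m) ⬝ᵥ (A *ᵥ (x - m)) + c ⬝ᵥ (x - m)) ν :=
  (integrable_dotProduct_mulVec_sub h2 m A).add (integrable_dotProduct_sub h2 m c)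

lemma integral_dotProduct_mulVec_sub_add_dotProduct_sub [IsProbabilityMeasure ν]
    (hm : ∀ i, m i = ∫ x, x i ∂ν) {C : Matrix ι ι ℝ}
    (hC : ∀ i j, C i j = ∫ x, (x i - m i) * (x j - m j) ∂ν) (A : Matrix ι ι ℝ) (c : ι → ℝ) :
    ∫ x, (x - m) ⬝ᵥ (A *ᵥ (x - m)) + c ⬝ᵥ (x - m) ∂ν = (A * C).trace := by
  rw [integral_add (integrable_dotProduct_mulVec_sub h2 m A) (integrable_dotProduct_sub h2 m c),
    integral_dotProduct_mulVec_sub h2 m hC, integral_dotProduct_sub_eq_zero h2 m hm,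
    add_zero]

end Moments

lemma integral_comp_fst_add_comp_snd {α β : Type*} [MeasurableSpace α] [MeasurableSpace β]
    {π : Measure (α × β)} {f : α → ℝ} {g : β → ℝ} (hf : Integrable f (π.map Prod.fst))
    (hg : Integrable g (π.map Prod.snd)) :
    ∫ p, f p.1 + g p.2 ∂π = ∫ x, f x ∂π.map Prod.fst + ∫ y, g y ∂π.map Prod.snd := by
  have hf' : Integrable (fun p : α × β => f p.1) π := hf.comp_measurable measurable_fst
  have hg' : Integrable (fun p : α × β => g p.2) π := hg.comp_measurable measurable_snd
  rw [integral_add hf' hg',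
    integral_map measurable_fst.aemeasurable hf.aestronglyMeasurable,
    integral_map measurable_snd.aemeasurable hg.aestronglyMeasurable]

lemma dotProduct_sub_self_le {ι : Type*} [Fintype ι] (a b : ι → ℝ) :
    (a - b) ⬝ᵥ (a - b) ≤ 2 * (a ⬝ᵥ a) + 2 * (b ⬝ᵥ b) := by
  have := dotProduct_self_star_nonneg (a + b)
  simp only [star_trivial, add_dotProduct, dotProduct_add, sub_dotProduct, dotProduct_sub,
    dotProduct_comm b a] at *
  linarith

lemma integrable_dotProduct_self_sub {ι : Type*} [Fintype ι] {π : Measure ((ι → ℝ) × (ι → ℝ))}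
    (h1 : Integrable (fun x => x ⬝ᵥ x) (π.map Prod.fst))
    (h2 : Integrable (fun y => y ⬝ᵥ y) (π.map Prod.snd)) :
    Integrable (fun p => (p.1 - p.2) ⬝ᵥ (p.1 - p.2)) π := by
  refine (((h1.comp_measurable measurable_fst).const_mul 2).add
    ((h2.comp_measurable measurable_snd).const_mul 2)).mono' (by fun_prop) (.of_forall fun p => ?_)
  rw [Real.norm_of_nonneg (by simpa using dotProduct_self_star_nonneg (p.1 - p.2))]
  exact dotProduct_sub_self_le p.1 p.2

theorem le_integral_dotProduct_self_sub_of_posDef {ι : Type*} [Fintype ι] [DecidableEq ι]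
    {ρ ρ₀ : Measure (ι → ℝ)} [IsProbabilityMeasure ρ] [IsProbabilityMeasure ρ₀]
    (h2 : Integrable (fun x => x ⬝ᵥ x) ρ) (h2₀ : Integrable (fun x => x ⬝ᵥ x) ρ₀)
    {μ μ₀ : ι → ℝ} {S P₀ : Matrix ι ι ℝ}
    (hμ : ∀ i, μ i = ∫ x, x i ∂ρ) (hμ₀ : ∀ i, μ₀ i = ∫ x, x i ∂ρ₀)
    (hScov : ∀ i j, S i j = ∫ x, (x i - μ i) * (x j - μ j) ∂ρ)
    (hP₀cov : ∀ i j, P₀ i j = ∫ x, (x i - μ₀ i) * (x j - μ₀ j) ∂ρ₀)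
    {K : Matrix ι ι ℝ} (hK : K.PosDef) {π : Measure ((ι → ℝ) × (ι → ℝ))}
    (hfst : π.map Prod.fst = ρ) (hsnd : π.map Prod.snd = ρ₀) :
    (μ - μ₀) ⬝ᵥ (μ - μ₀) + ((1 - K) * S).trace + ((1 - K⁻¹) * P₀).trace
      ≤ ∫ p, (p.1 - p.2) ⬝ᵥ (p.1 - p.2) ∂π := by
  set c := μ - μ₀ with hc
  set φ : (ι → ℝ) → ℝ := fun x => (x - μ) ⬝ᵥ ((1 - K) *ᵥ (x - μ)) + ((2 : ℝ) • c) ⬝ᵥ (x - μ)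
  set ψ : (ι → ℝ) → ℝ := fun y => (y - μ₀) ⬝ᵥ ((1 - K⁻¹) *ᵥ (y - μ₀)) + (-((2 : ℝ) • c)) ⬝ᵥ (y - μ₀)
  have hφ : Integrable φ ρ := integrable_dotProduct_mulVec_sub_add_dotProduct_sub h2 μ _ _
  have hψ : Integrable ψ ρ₀ := integrable_dotProduct_mulVec_sub_add_dotProduct_sub h2₀ μ₀ _ _
  subst hfst hsnd
  have := Measure.isProbabilityMeasure_of_map (μ := π) Prod.fst
  have hφψ : Integrable (fun p : (ι → ℝ) × (ι → ℝ) => φ p.1 + ψ p.2) π :=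
    (hφ.comp_measurable measurable_fst).add (hψ.comp_measurable measurable_snd)
  calc c ⬝ᵥ c + ((1 - K) * S).trace + ((1 - K⁻¹) * P₀).trace
      = ∫ p, φ p.1 + ψ p.2 + c ⬝ᵥ c ∂π := by
        rw [integral_add hφψ (integrable_const _), integral_comp_fst_add_comp_snd hφ hψ,
          integral_dotProduct_mulVec_sub_add_dotProduct_sub h2 μ hμ hScov,
          integral_dotProduct_mulVec_sub_add_dotProduct_sub h2₀ μ₀ hμ₀ hP₀cov, integral_const]
        simp only [probReal_univ, one_smul]
        ring
    _ ≤ ∫ p, (p.1 - p.2) ⬝ᵥ (p.1 - p.2) ∂π := by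
        refine integral_mono (hφψ.add (integrable_const _))
          (integrable_dotProduct_self_sub h2 h2₀) fun p => ?_
        have hsplit : p.1 - μ - (p.2 - μ₀) + c = p.1 - p.2 := by rw [hc]; abel
        simpa only [hsplit] using hK.dotProduct_self_sub_ge (p.1 - μ) (p.2 - μ₀) c

/-- Gelbrich bound: for probability measures `ρ, ρ₀` with finite second moments, means
`μ, μ₀` and positive definite covariances `S, P₀`,
`W₂²(ρ, ρ₀) ≥ ‖μ − μ₀‖² + tr(S + P₀ − 2(P₀^{1/2} S P₀^{1/2})^{1/2})`. -/
theorem stmt6 {n : ℕ} (ρ ρ₀ : Measure (Fin n → ℝ))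
    [IsProbabilityMeasure ρ] [IsProbabilityMeasure ρ₀]
    (h2 : Integrable (fun x => x ⬝ᵥ x) ρ) (h2₀ : Integrable (fun x => x ⬝ᵥ x) ρ₀)
    (μ μ₀ : Fin n → ℝ) (S P₀ : Matrix (Fin n) (Fin n) ℝ)
    (hμ : ∀ i, μ i = ∫ x, x i ∂ρ) (hμ₀ : ∀ i, μ₀ i = ∫ x, x i ∂ρ₀)
    (hScov : ∀ i j, S i j = ∫ x, (x i - μ i) * (x j - μ j) ∂ρ)
    (hP₀cov : ∀ i j, P₀ i j = ∫ x, (x i - μ₀ i) * (x j - μ₀ j) ∂ρ₀)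
    (hS : S.PosDef) (hP₀ : P₀.PosDef)
    (hmid : (hP₀.posSemidef.sqrt * S * hP₀.posSemidef.sqrt).PosSemidef) :
    W2sq ρ ρ₀ ≥ (μ - μ₀) ⬝ᵥ (μ - μ₀) + (S + P₀ - (2 : ℝ) • hmid.sqrt).trace := by
  obtain ⟨K, hK, hKS, hKP⟩ := hS.exists_posDef_trace_mul_eq_trace_sqrt hP₀ hmid
  have htrace : (S + P₀ - (2 : ℝ) • hmid.sqrt).trace
      = ((1 - K) * S).trace + ((1 - K⁻¹) * P₀).trace := by
    simp only [Matrix.sub_mul, Matrix.one_mul, trace_sub, trace_add, trace_smul, hKS, hKP,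
      smul_eq_mul]
    ring
  rw [ge_iff_le, W2sq, htrace, ← add_assoc]
  refine le_csInf ⟨_, ρ.prod ρ₀, by simp, by simp, rfl⟩ ?_
  rintro _ ⟨π, hfst, hsnd, rfl⟩
  exact le_integral_dotProduct_self_sub_of_posDef h2 h2₀ hμ hμ₀ hScov hP₀cov hK hfst hsnd
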